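/- Let D be a triangulated category, C a thick subcategory of D, and Q : D → D/C the Verdier quotient. For a stable t-structure (U, V) in D, the pair (Q(U), Q(V)) is a stable t-structure in D/C if and only if (U ∩ C, V ∩ C) is a stable t-structure in C. -/

import Mathlib

/-!
Let `W` be the class of morphisms whose cone lies in the thick subcategory `Cs`. Without the
octahedral axiom `W` need not be multiplicative, but its multiplicative closure still has a
calculus of left fractions, so `Q X ≅ 0` exactly when some morphism `X ⟶ Y` of that closure
vanishes. Pulling a factorization through `Cs` back along each factor of such a morphism makes
`𝟙 X` factor through `Cs`, and thickness gives `X ∈ Cs`: the kernel of `Q` is `Cs`.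

If `(Q(U), Q(V))` is a t-structure, the decomposition triangle of `X ∈ Cs` maps to a triangle
with zero middle term, whose outer terms must then vanish; hence they lie in `Cs`.
Conversely, a morphism `Q A ⟶ Q B` with `A ∈ U`, `B ∈ V` is a fraction `f / s` with cone of
`s` in `Cs`; decomposing that cone along `(U ∩ Cs, V ∩ Cs)` shows that `f` factors through an
object of `U ∩ Cs`, so the fraction is zero.
-/

open CategoryTheory Limits Pretriangulated

universe v₁ v₂ u₁ u₂

namespace PaperIKM

variable (C : Type u₁) [Category.{v₁} C] [HasZeroObject C] [HasShift C ℤ] [Preadditive C]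
  [∀ n : ℤ, (shiftFunctor C n).Additive] [Pretriangulated C]

/-- A stable t-structure in a pretriangulated category. -/
structure IsStableTStructure (U V : Set C) : Prop where
  shift_memU : ∀ (n : ℤ) (X : C), X ∈ U → (shiftFunctor C n).obj X ∈ U
  shift_memV : ∀ (n : ℤ) (X : C), X ∈ V → (shiftFunctor C n).obj X ∈ V
  hom_zero : ∀ ⦃X Y : C⦄, X ∈ U → Y ∈ V → ∀ f : X ⟶ Y, f = 0
  exists_triangle : ∀ X : C, ∃ (A B : C) (_ : A ∈ U) (_ : B ∈ V)
    (f : A ⟶ X) (g : X ⟶ B) (h : B ⟶ A⟦(1 : ℤ)⟧),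
      Triangle.mk f g h ∈ distTriang C

/-- A relative version: `(U, V)` is a stable t-structure "in" the triangulated subcategory
whose objects form the set `W` (all subcategories being subcategories of the ambient
category `C`). -/
structure IsStableTStructureRel (W U V : Set C) : Prop where
  subU : U ⊆ W
  subV : V ⊆ W
  shift_memU : ∀ (n : ℤ) (X : C), X ∈ U → (shiftFunctor C n).obj X ∈ U
  shift_memV : ∀ (n : ℤ) (X : C), X ∈ V → (shiftFunctor C n).obj X ∈ V
  hom_zero : ∀ ⦃X Y : C⦄, X ∈ U → Y ∈ V → ∀ f : X ⟶ Y, f = 0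
  exists_triangle : ∀ X ∈ W, ∃ (A B : C) (_ : A ∈ U) (_ : B ∈ V)
    (f : A ⟶ X) (g : X ⟶ B) (h : B ⟶ A⟦(1 : ℤ)⟧),
      Triangle.mk f g h ∈ distTriang C

/-- A thick subcategory: full triangulated subcategory closed under direct summands. -/
structure IsThickSub (U : Set C) : Prop where
  zero_mem : ∀ X : C, IsZero X → X ∈ U
  iso_mem : ∀ ⦃X Y : C⦄, (X ≅ Y) → X ∈ U → Y ∈ U
  shift_mem : ∀ (n : ℤ) (X : C), X ∈ U → (shiftFunctor C n).obj X ∈ U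
  ext_mem : ∀ T : Triangle C, (T ∈ distTriang C) → T.obj₁ ∈ U → T.obj₃ ∈ U → T.obj₂ ∈ U
  summand_mem : ∀ (X Y : C) (s : X ⟶ Y) (r : Y ⟶ X), s ≫ r = 𝟙 X → Y ∈ U → X ∈ U

variable {C}

/-- The class of morphisms whose cone belongs to `W`; localizing at this class produces the
Verdier quotient by `W`. -/
def coneIn (W : Set C) : MorphismProperty C := fun X Y f =>
  ∃ (Z : C) (g : Y ⟶ Z) (h : Z ⟶ X⟦(1 : ℤ)⟧),
    (Triangle.mk f g h ∈ distTriang C) ∧ Z ∈ W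

variable {E : Type u₂} [Category.{v₂} E] [HasZeroObject E] [HasShift E ℤ] [Preadditive E]
  [∀ n : ℤ, (shiftFunctor E n).Additive] [Pretriangulated E]

/-- The image of a subcategory under a functor, closed under isomorphism. -/
def qImage (Q : C ⥤ E) (U : Set C) : Set E :=
  {Y | ∃ X ∈ U, Nonempty (Y ≅ Q.obj X)}

section MultiplicativeClosure

variable {D : Type*} [Category D] {W : MorphismProperty D}

lemma exists_leftFraction_multiplicativeClosure
    (hW : ∀ ⦃X' X Y : D⦄ (s : X' ⟶ X) (_ : W s) (f : X' ⟶ Y),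
      ∃ (Y' : D) (f' : X ⟶ Y') (s' : Y ⟶ Y'), W s' ∧ f ≫ s' = s ≫ f')
    ⦃X' X : D⦄ (s : X' ⟶ X) (hs : W.multiplicativeClosure s) :
    ∀ ⦃Y : D⦄ (f : X' ⟶ Y), ∃ (Y' : D) (f' : X ⟶ Y') (s' : Y ⟶ Y'),
      W.multiplicativeClosure s' ∧ f ≫ s' = s ≫ f' := by
  induction hs with
  | of s hs =>
    intro Y f
    obtain ⟨Y', f', s', hs', eq⟩ := hW s hs f
    exact ⟨Y', f', s', .of s' hs', eq⟩
  | id X => exact fun Y f => ⟨Y, f, 𝟙 Y, .id Y, by simp⟩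
  | comp_of s t _ ht ih =>
    intro Y f
    obtain ⟨Y₁, f₁, s₁, hs₁, eq₁⟩ := ih f
    obtain ⟨Y₂, f₂, s₂, hs₂, eq₂⟩ := hW t ht f₁
    refine ⟨Y₂, f₂, s₁ ≫ s₂, .comp_of s₁ s₂ hs₁ hs₂, ?_⟩
    rw [reassoc_of% eq₁, eq₂, Category.assoc]

lemma ext_multiplicativeClosure
    (hW : ∀ ⦃X' X Y : D⦄ (f₁ f₂ : X ⟶ Y) (s : X' ⟶ X) (_ : W s), s ≫ f₁ = s ≫ f₂ →
      ∃ (Y' : D) (t : Y ⟶ Y'), W t ∧ f₁ ≫ t = f₂ ≫ t)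
    ⦃X' X : D⦄ (s : X' ⟶ X) (hs : W.multiplicativeClosure s) :
    ∀ ⦃Y : D⦄ (f₁ f₂ : X ⟶ Y), s ≫ f₁ = s ≫ f₂ →
      ∃ (Y' : D) (t : Y ⟶ Y'), W.multiplicativeClosure t ∧ f₁ ≫ t = f₂ ≫ t := by
  induction hs with
  | of s hs =>
    intro Y f₁ f₂ eq
    obtain ⟨Y', t, ht, eq'⟩ := hW f₁ f₂ s hs eq
    exact ⟨Y', t, .of t ht, eq'⟩
  | id X => exact fun Y f₁ f₂ eq => ⟨Y, 𝟙 Y, .id Y, by simpa using eq⟩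
  | comp_of s t _ ht ih =>
    intro Y f₁ f₂ eq
    obtain ⟨Y₁, t₁, ht₁, eq₁⟩ := ih (t ≫ f₁) (t ≫ f₂) (by simpa using eq)
    obtain ⟨Y₂, t₂, ht₂, eq₂⟩ := hW (f₁ ≫ t₁) (f₂ ≫ t₁) t ht (by simpa using eq₁)
    exact ⟨Y₂, t₁ ≫ t₂, .comp_of t₁ t₂ ht₁ ht₂, by simpa using eq₂⟩

lemma hasLeftCalculusOfFractions_multiplicativeClosure
    (hW₁ : ∀ ⦃X' X Y : D⦄ (s : X' ⟶ X) (_ : W s) (f : X' ⟶ Y),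
      ∃ (Y' : D) (f' : X ⟶ Y') (s' : Y ⟶ Y'), W s' ∧ f ≫ s' = s ≫ f')
    (hW₂ : ∀ ⦃X' X Y : D⦄ (f₁ f₂ : X ⟶ Y) (s : X' ⟶ X) (_ : W s), s ≫ f₁ = s ≫ f₂ →
      ∃ (Y' : D) (t : Y ⟶ Y'), W t ∧ f₁ ≫ t = f₂ ≫ t) :
    W.multiplicativeClosure.HasLeftCalculusOfFractions where
  exists_leftFraction X Y φ := by
    obtain ⟨Y', f', s', hs', eq⟩ := exists_leftFraction_multiplicativeClosure hW₁ φ.s φ.hs φ.f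
    exact ⟨⟨f', s', hs'⟩, eq⟩
  ext X' X Y f₁ f₂ s hs eq := by
    obtain ⟨Y', t, ht, eq'⟩ := ext_multiplicativeClosure hW₂ s hs f₁ f₂ eq
    exact ⟨Y', t, ht, eq'⟩

lemma isLocalization_multiplicativeClosure {D' : Type*} [Category D'] (L : D ⥤ D')
    [L.IsLocalization W] :
    L.IsLocalization W.multiplicativeClosure :=
  Functor.IsLocalization.of_equivalence_source L W L W.multiplicativeClosure
    CategoryTheory.Equivalence.refl
    (fun _ _ f hf => W.multiplicativeClosure.le_isoClosure f (.of f hf))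
    ((W.multiplicativeClosure_le_iff ((MorphismProperty.isomorphisms D').inverseImage L)).2
      (Localization.inverts L W)) L.leftUnitor

end MultiplicativeClosure

section ConeIn

variable {Cs : Set C}

lemma coneIn_exists_leftFraction ⦃X' X Y : C⦄ (s : X' ⟶ X) (hs : coneIn Cs s) (f : X' ⟶ Y) :
    ∃ (Y' : C) (f' : X ⟶ Y') (s' : Y ⟶ Y'), coneIn Cs s' ∧ f ≫ s' = s ≫ f' := by
  obtain ⟨Z, g, h, hT, hZ⟩ := hs
  obtain ⟨Y', s', g', hT'⟩ := distinguished_cocone_triangle₂ (h ≫ f⟦(1 : ℤ)⟧')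
  obtain ⟨f', comm, -⟩ :=
    complete_distinguished_triangle_morphism₂ _ _ hT hT' f (𝟙 Z) (Category.id_comp _).symm
  exact ⟨Y', f', s', ⟨Z, g', _, hT', hZ⟩, comm.symm⟩

lemma coneIn_ext (hCs : ∀ X : C, X ∈ Cs → X⟦(1 : ℤ)⟧ ∈ Cs)
    ⦃X' X Y : C⦄ (f₁ f₂ : X ⟶ Y) (s : X' ⟶ X) (hs : coneIn Cs s) (eq : s ≫ f₁ = s ≫ f₂) :
    ∃ (Y' : C) (t : Y ⟶ Y'), coneIn Cs t ∧ f₁ ≫ t = f₂ ≫ t := by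
  obtain ⟨Z, g, h, hT, hZ⟩ := hs
  have hs : s ≫ (f₁ - f₂) = 0 := by rw [Preadditive.comp_sub, eq, sub_self]
  obtain ⟨q : Z ⟶ Y, hq : f₁ - f₂ = g ≫ q⟩ := Triangle.yoneda_exact₂ _ hT _ hs
  obtain ⟨Y', t, r, hT'⟩ := distinguished_cocone_triangle q
  have hqt : q ≫ t = 0 := comp_distTriang_mor_zero₁₂ _ hT'
  refine ⟨Y', t, ⟨_, _, _, rot_of_distTriang _ hT', hCs Z hZ⟩, ?_⟩
  rw [← sub_eq_zero, ← Preadditive.sub_comp, hq, Category.assoc, hqt, Limits.comp_zero]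

lemma coneIn_hasLeftCalculusOfFractions (hCs : ∀ X : C, X ∈ Cs → X⟦(1 : ℤ)⟧ ∈ Cs) :
    (coneIn Cs).multiplicativeClosure.HasLeftCalculusOfFractions :=
  hasLeftCalculusOfFractions_multiplicativeClosure coneIn_exists_leftFraction (coneIn_ext hCs)

end ConeIn

section FactorsThrough

def FactorsThrough (Cs : Set C) {X Y : C} (f : X ⟶ Y) : Prop :=
  ∃ (R : C) (a : X ⟶ R) (b : R ⟶ Y), R ∈ Cs ∧ a ≫ b = f

variable {Cs : Set C} (hC : IsThickSub C Cs)
include hC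

lemma FactorsThrough.add {X Y : C} {f g : X ⟶ Y} (hf : FactorsThrough Cs f)
    (hg : FactorsThrough Cs g) : FactorsThrough Cs (f + g) := by
  obtain ⟨R, a, b, hR, rfl⟩ := hf
  obtain ⟨R', a', b', hR', rfl⟩ := hg
  exact ⟨R ⊞ R', biprod.lift a a', biprod.desc b b',
    hC.ext_mem _ (binaryBiproductTriangle_distinguished R R') hR hR', biprod.lift_desc⟩

lemma factorsThrough_of_comp_coneIn {N Y : C} {g : N ⟶ Y} (hg : coneIn Cs g)
    {X : C} {f : X ⟶ N} (hfg : FactorsThrough Cs (f ≫ g)) : FactorsThrough Cs f := by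
  obtain ⟨Z, p, q, hT, hZ⟩ := hg
  obtain ⟨R, w, d, hR, hwd⟩ := hfg
  obtain ⟨F, φ, ψ, hTF⟩ := distinguished_cocone_triangle₁ (d ≫ p)
  have hF : F ∈ Cs :=
    hC.ext_mem _ (inv_rot_of_distTriang _ hTF) (hC.shift_mem (-1) Z hZ) hR
  obtain ⟨ξ : F ⟶ N, hξ : φ ≫ d = ξ ≫ g, -⟩ :=
    complete_distinguished_triangle_morphism₁ _ _ hTF hT d (𝟙 Z) (Category.comp_id _)
  have hgp : g ≫ p = 0 := comp_distTriang_mor_zero₁₂ _ hT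
  have hw : w ≫ d ≫ p = 0 := by
    rw [← Category.assoc, hwd, Category.assoc, hgp, Limits.comp_zero]
  obtain ⟨ρ : X ⟶ F, hρ : w = ρ ≫ φ⟩ := Triangle.coyoneda_exact₂ _ hTF w hw
  have hf : (f - ρ ≫ ξ) ≫ g = 0 := by
    rw [Preadditive.sub_comp, Category.assoc, ← hξ, ← Category.assoc, ← hρ, hwd, sub_self]
  -- `f = (f - ρ ≫ ξ) + ρ ≫ ξ`, the first summand factoring through `Z⟦-1⟧`, the second through `F`
  obtain ⟨ε, hε⟩ := Triangle.coyoneda_exact₂ _ (inv_rot_of_distTriang _ hT) _ hf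
  have h₁ : FactorsThrough Cs (f - ρ ≫ ξ) :=
    ⟨_, ε, _, hC.shift_mem (-1) Z hZ, hε.symm⟩
  have h₂ : FactorsThrough Cs (ρ ≫ ξ) := ⟨F, ρ, ξ, hF, rfl⟩
  simpa using h₁.add hC h₂

lemma factorsThrough_of_comp_multiplicativeClosure {N Y : C} {g : N ⟶ Y}
    (hg : (coneIn Cs).multiplicativeClosure g) :
    ∀ {X : C} {f : X ⟶ N}, FactorsThrough Cs (f ≫ g) → FactorsThrough Cs f := by
  induction hg with
  | of g hg => exact fun hfg => factorsThrough_of_comp_coneIn hC hg hfg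
  | id X => simp
  | comp_of g t _ ht ih =>
    intro X f hfgt
    exact ih (factorsThrough_of_comp_coneIn hC ht (by simpa using hfgt))

open ZeroObject in
lemma mem_of_multiplicativeClosure_zero {X Y : C}
    (h : (coneIn Cs).multiplicativeClosure (0 : X ⟶ Y)) : X ∈ Cs := by
  obtain ⟨R, a, b, hR, hab⟩ := factorsThrough_of_comp_multiplicativeClosure hC h
    ⟨0, 0, 0, hC.zero_mem _ (isZero_zero C), by simp⟩
  exact hC.summand_mem X R a b hab hR

end FactorsThrough

section Pretriangulated

variable {D : Type*} [Category D] [HasZeroObject D] [HasShift D ℤ] [Preadditive D]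
  [∀ n : ℤ, (shiftFunctor D n).Additive] [Pretriangulated D]

lemma distinguished_of_iso_obj₂ {X Y Z Y' : D} {f : X ⟶ Y} {g : Y ⟶ Z} {h : Z ⟶ X⟦(1 : ℤ)⟧}
    (hT : Triangle.mk f g h ∈ distTriang D) (e : Y ≅ Y') :
    Triangle.mk (f ≫ e.hom) (e.inv ≫ g) h ∈ distTriang D :=
  -- the squares are stated explicitly: `simp` does not see through the objects of `Triangle.mk`
  isomorphic_distinguished _ hT _ (Triangle.isoMk _ _ (Iso.refl X) e.symm (Iso.refl Z)
    (by exact (by simp : (f ≫ e.hom) ≫ e.inv = 𝟙 X ≫ f)) (by exact Category.comp_id _)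
    (by exact (by simp : h ≫ (shiftFunctor D 1).map (𝟙 X) = 𝟙 Z ≫ h)))

lemma IsStableTStructure.isZero_of_distTriang {U V : Set D} (h : IsStableTStructure D U V)
    {T : Triangle D} (hT : T ∈ distTriang D)
    (h₁ : T.obj₁ ∈ U) (h₂ : IsZero T.obj₂) (h₃ : T.obj₃ ∈ V) :
    IsZero T.obj₁ ∧ IsZero T.obj₃ := by
  have : IsIso T.mor₃ := (T.isZero₂_iff_isIso₃ hT).1 h₂
  have hinv : inv T.mor₃ = 0 := h.hom_zero (h.shift_memU 1 _ h₁) h₃ _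
  have hZ₃ : IsZero T.obj₃ := by
    rw [IsZero.iff_id_eq_zero, ← IsIso.hom_inv_id T.mor₃, hinv, Limits.comp_zero]
  exact ⟨T.isZero₁_of_isZero₂₃ hT h₂ hZ₃, hZ₃⟩

end Pretriangulated

section QImage

lemma qImage_shift_mem {D D' : Type*} [Category D] [Category D'] [HasShift D ℤ]
    [HasShift D' ℤ] (F : D ⥤ D') [F.CommShift ℤ] {U : Set D}
    (hU : ∀ (n : ℤ) (X : D), X ∈ U → X⟦n⟧ ∈ U) (n : ℤ) (Y : D') (hY : Y ∈ qImage F U) :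
    Y⟦n⟧ ∈ qImage F U := by
  obtain ⟨X, hX, ⟨e⟩⟩ := hY
  exact ⟨X⟦n⟧, hU n X hX, ⟨(shiftFunctor D' n).mapIso e ≪≫ ((F.commShiftIso n).app X).symm⟩⟩

lemma qImage_hom_zero {D D' : Type*} [Category D] [Category D'] [HasZeroMorphisms D']
    (F : D ⥤ D') {U V : Set D}
    (hF : ∀ ⦃A B : D⦄, A ∈ U → B ∈ V → ∀ φ : F.obj A ⟶ F.obj B, φ = 0)
    ⦃X Y : D'⦄ (hX : X ∈ qImage F U) (hY : Y ∈ qImage F V) (f : X ⟶ Y) : f = 0 := by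
  obtain ⟨A, hA, ⟨e₁⟩⟩ := hX
  obtain ⟨B, hB, ⟨e₂⟩⟩ := hY
  calc f = e₁.hom ≫ (e₁.inv ≫ f ≫ e₂.hom) ≫ e₂.inv := by simp
    _ = 0 := by rw [hF hA hB (e₁.inv ≫ f ≫ e₂.hom)]; simp

variable {U V : Set C} (Q : C ⥤ E) [Q.CommShift ℤ] [Q.IsTriangulated] [Q.EssSurj]

lemma qImage_exists_triangle (h : IsStableTStructure C U V) (Y : E) :
    ∃ (A B : E) (_ : A ∈ qImage Q U) (_ : B ∈ qImage Q V)
      (f : A ⟶ Y) (g : Y ⟶ B) (k : B ⟶ A⟦(1 : ℤ)⟧), Triangle.mk f g k ∈ distTriang E := by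
  obtain ⟨A, B, hA, hB, f, g, k, hT⟩ := h.exists_triangle (Q.objPreimage Y)
  have hQT : Triangle.mk (Q.map f) (Q.map g) (Q.map k ≫ (Q.commShiftIso (1 : ℤ)).hom.app A) ∈
      distTriang E := Q.map_distinguished _ hT
  exact ⟨Q.obj A, Q.obj B, ⟨A, hA, ⟨Iso.refl _⟩⟩, ⟨B, hB, ⟨Iso.refl _⟩⟩, _, _, _,
    distinguished_of_iso_obj₂ hQT (Q.objObjPreimageIso Y)⟩

lemma isStableTStructure_qImage (h : IsStableTStructure C U V)
    (hQ : ∀ ⦃A B : C⦄, A ∈ U → B ∈ V → ∀ φ : Q.obj A ⟶ Q.obj B, φ = 0) :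
    IsStableTStructure E (qImage Q U) (qImage Q V) where
  shift_memU := qImage_shift_mem Q h.shift_memU
  shift_memV := qImage_shift_mem Q h.shift_memV
  hom_zero := qImage_hom_zero Q hQ
  exists_triangle := qImage_exists_triangle Q h

end QImage

lemma IsStableTStructure.factorsThrough_of_coneIn {Cs U V : Set C} (h : IsStableTStructure C U V)
    (hrel : IsStableTStructureRel C Cs (U ∩ Cs) (V ∩ Cs)) {A B Y : C} (hA : A ∈ U) (hB : B ∈ V)
    (f : A ⟶ Y) {s : B ⟶ Y} (hs : coneIn Cs s) : FactorsThrough Cs f := by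
  obtain ⟨Z, g, k, hT, hZ⟩ := hs
  obtain ⟨A₁, B₁, hA₁, hB₁, α, β, γ, hT₁⟩ := hrel.exists_triangle Z hZ
  obtain ⟨α' : A₁ ⟶ Y, hα' : α = α' ≫ g⟩ :=
    Triangle.coyoneda_exact₃ _ hT α (h.hom_zero hA₁.1 (h.shift_memV 1 B hB) _)
  obtain ⟨u : A ⟶ A₁, hu : f ≫ g = u ≫ α⟩ :=
    Triangle.coyoneda_exact₂ _ hT₁ (f ≫ g) (h.hom_zero hA hB₁.1 _)
  have hfg : (f - u ≫ α') ≫ g = 0 := by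
    rw [Preadditive.sub_comp, Category.assoc, ← hα', ← hu, sub_self]
  obtain ⟨δ : A ⟶ B, hδ : f - u ≫ α' = δ ≫ s⟩ := Triangle.coyoneda_exact₂ _ hT _ hfg
  rw [h.hom_zero hA hB δ, Limits.zero_comp, sub_eq_zero] at hδ
  exact ⟨A₁, u, α', hA₁.2, hδ.symm⟩

section Localization

variable {Cs : Set C} {D : Type*} [Category D] (L : C ⥤ D) [L.IsLocalization (coneIn Cs)]

open ZeroObject in
lemma isZero_obj_of_mem [HasZeroMorphisms D] [L.PreservesZeroMorphisms] {X : C} (hX : X ∈ Cs) :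
    IsZero (L.obj X) := by
  have : IsIso (L.map (0 : (0 : C) ⟶ X)) :=
    Localization.inverts L (coneIn Cs) _ ⟨X, 𝟙 X, 0, contractible_distinguished₁ X, hX⟩
  exact (L.map_isZero (isZero_zero C)).of_iso (asIso (L.map (0 : (0 : C) ⟶ X))).symm

lemma map_eq_zero_of_factorsThrough [HasZeroMorphisms D] [L.PreservesZeroMorphisms] {X Y : C}
    {f : X ⟶ Y} (hf : FactorsThrough Cs f) : L.map f = 0 := by
  obtain ⟨R, a, b, hR, rfl⟩ := hf
  rw [L.map_comp, (isZero_obj_of_mem L hR).eq_of_tgt (L.map a) 0, Limits.zero_comp]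

lemma mem_of_isZero_obj (hC : IsThickSub C Cs) {X : C} (hX : IsZero (L.obj X)) : X ∈ Cs := by
  have := coneIn_hasLeftCalculusOfFractions (hC.shift_mem 1)
  have := isLocalization_multiplicativeClosure L (W := coneIn Cs)
  obtain ⟨Z, s, hs, eq⟩ := (MorphismProperty.map_eq_iff_postcomp L
    (coneIn Cs).multiplicativeClosure (𝟙 X) 0).1 (hX.eq_of_src _ _)
  rw [Category.id_comp, Limits.zero_comp] at eq
  exact mem_of_multiplicativeClosure_zero hC (eq ▸ hs)

end Localization

section VerdierQuotient

variable {Cs : Set C} (Q : C ⥤ E) [Q.CommShift ℤ] [Q.IsTriangulated]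
  [Q.IsLocalization (coneIn Cs)] (hC : IsThickSub C Cs)
include hC

lemma coneIn_of_isIso_map {X Y : C} (s : X ⟶ Y) [IsIso (Q.map s)] : coneIn Cs s := by
  obtain ⟨Z, g, k, hT⟩ := distinguished_cocone_triangle s
  have hZ : IsZero (Q.obj Z) :=
    Triangle.isZero₃_of_isIso₁ _ (Q.map_distinguished _ hT) (inferInstanceAs (IsIso (Q.map s)))
  exact ⟨Z, g, k, hT, mem_of_isZero_obj Q hC hZ⟩

lemma IsStableTStructure.quotient_hom_zero {U V : Set C} (h : IsStableTStructure C U V)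
    (hrel : IsStableTStructureRel C Cs (U ∩ Cs) (V ∩ Cs)) ⦃A B : C⦄ (hA : A ∈ U) (hB : B ∈ V)
    (φ : Q.obj A ⟶ Q.obj B) : φ = 0 := by
  have := coneIn_hasLeftCalculusOfFractions (hC.shift_mem 1)
  have := isLocalization_multiplicativeClosure Q (W := coneIn Cs)
  obtain ⟨ψ, rfl⟩ := Localization.exists_leftFraction Q (coneIn Cs).multiplicativeClosure φ
  have := Localization.inverts Q _ _ ψ.hs
  have hf : Q.map ψ.f = 0 := map_eq_zero_of_factorsThrough Q
    (h.factorsThrough_of_coneIn hrel hA hB ψ.f (coneIn_of_isIso_map Q hC ψ.s))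
  rw [← cancel_mono (Q.map ψ.s), Limits.zero_comp,
    MorphismProperty.LeftFraction.map_comp_map_s, hf]

end VerdierQuotient

/-- let `Cs` be a thick subcategory of `D` and `Q : D → D/Cs` the Verdier
quotient (a triangulated localization at the morphisms with cone in `Cs`). For a stable
t-structure `(U, V)` in `D`, `(Q(U), Q(V))` is a stable t-structure in `D/Cs` iff
`(U ∩ Cs, V ∩ Cs)` is a stable t-structure in `Cs`. -/
theorem stmt9 (Cs : Set C) (hC : IsThickSub C Cs)
    (Q : C ⥤ E) [Q.CommShift ℤ] [Q.IsTriangulated] [Q.IsLocalization (coneIn Cs)]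
    (U V : Set C) (h : IsStableTStructure C U V) :
    IsStableTStructure E (qImage Q U) (qImage Q V) ↔
      IsStableTStructureRel C Cs (U ∩ Cs) (V ∩ Cs) := by
  constructor
  · intro hE
    refine ⟨Set.inter_subset_right, Set.inter_subset_right,
      fun n X hX => ⟨h.shift_memU n X hX.1, hC.shift_mem n X hX.2⟩,
      fun n X hX => ⟨h.shift_memV n X hX.1, hC.shift_mem n X hX.2⟩,
      fun X Y hX hY f => h.hom_zero hX.1 hY.1 f, fun X hX => ?_⟩
    obtain ⟨A, B, hA, hB, f, g, k, hT⟩ := h.exists_triangle X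
    obtain ⟨hQA, hQB⟩ := hE.isZero_of_distTriang (Q.map_distinguished _ hT)
      ⟨A, hA, ⟨Iso.refl _⟩⟩ (isZero_obj_of_mem Q hX) ⟨B, hB, ⟨Iso.refl _⟩⟩
    exact ⟨A, B, ⟨hA, mem_of_isZero_obj Q hC hQA⟩, ⟨hB, mem_of_isZero_obj Q hC hQB⟩, f, g, k, hT⟩
  · intro hrel
    have := Localization.essSurj Q (coneIn Cs)
    exact isStableTStructure_qImage Q h (h.quotient_hom_zero Q hC hrel)

end PaperIKM
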